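/- For every admissible list A of integers, the adjoint A* (the unique admissible list with e(A*) = 1 - e(A.reverse)) satisfies A** = A. -/

import Mathlib

/-- Discriminant of a linear chain: determinant of the tridiagonal matrix. -/
def chainD : List ℤ → ℤ
  | [] => 1
  | [a] => a
  | a :: b :: L => a * chainD (b :: L) - chainD L

/-- A list is admissible if it is nonempty and all entries are at least 2. -/
def Admissible (A : List ℤ) : Prop := A ≠ [] ∧ ∀ x ∈ A, 2 ≤ x

/-- Inductance e(A) = d(Ā)/d(A). -/
def inductance (A : List ℤ) : ℚ := (chainD A.tail : ℚ) / (chainD A : ℚ)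

/-- Plumbing concatenation ⋆ of linear chains. -/
def pstar : List ℤ → List ℤ → List ℤ
  | [], B => B
  | A, [] => A
  | [a], b :: B => (a + b - 1) :: B
  | a :: A, B => a :: pstar A B

/-- TW n : the list of n copies of 2. -/
def TW (n : ℕ) : List ℤ := List.replicate n 2

/-!
For an admissible `A` write `p = d(A)`, `q = d(Ā)` and `q' = d(Ā')`, where `A'` is `A` reversed
(so `d(A') = p` and `e(A') = q'/p`). The product `∏ [[aᵢ, -1], [1, 0]]` has determinant `1` and
first column `(p, q)`; for `A'` it is the transpose conjugated by `diag(1, -1)`, so its top-right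
entry is `-q'` and `q q' ≡ 1 (mod p)`. Hence `e(A)` and `1 - e(A') = (p - q')/p` are reduced
fractions, and `A*` has `d = p` and `d(Ā*) = p - q'`. The congruence for `A*` then gives
`d(Ā*') ≡ -q (mod p)`, and both sides lie in `(0, p)`, so `d(Ā*') = p - q`. One more step
shows that `A**` has `d = p` and `d(Ā**) = q`. Finally an admissible list is determined by
`(d(A), d(Ā))`: its head is `⌈d(A) / d(Ā)⌉` and the rest is recovered recursively.
-/

theorem chainD_cons_cons (a b : ℤ) (L : List ℤ) :
    chainD (a :: b :: L) = a * chainD (b :: L) - chainD L := rfl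

theorem Admissible.of_cons {a : ℤ} {L : List ℤ} (h : Admissible (a :: L)) (hL : L ≠ []) :
    Admissible L :=
  ⟨hL, fun x hx => h.2 x (List.mem_cons_of_mem a hx)⟩

theorem Admissible.reverse {L : List ℤ} (h : Admissible L) : Admissible L.reverse :=
  ⟨List.reverse_ne_nil_iff.mpr h.1, fun x hx => h.2 x (List.mem_reverse.mp hx)⟩

theorem Admissible.chainD_tail_pos_lt :
    ∀ {L : List ℤ}, Admissible L → 0 < chainD L.tail ∧ chainD L.tail < chainD L
  | [], h => absurd rfl h.1
  | [a], h => by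
    have := h.2 a (by simp)
    simp only [List.tail_cons, chainD]
    omega
  | a :: b :: L, h => by
    have ha := h.2 a (by simp)
    have ih := (h.of_cons (List.cons_ne_nil b L)).chainD_tail_pos_lt
    simp only [List.tail_cons, chainD_cons_cons] at ih ⊢
    constructor <;> nlinarith

theorem Admissible.chainD_pos {L : List ℤ} (h : Admissible L) : 0 < chainD L :=
  h.chainD_tail_pos_lt.1.trans h.chainD_tail_pos_lt.2

theorem Admissible.eq_of_chainD_eq :
    ∀ {A B : List ℤ}, Admissible A → Admissible B → chainD A = chainD B →
      chainD A.tail = chainD B.tail → A = B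
  | [], _, hA, _, _, _ => absurd rfl hA.1
  | _, [], _, hB, _, _ => absurd rfl hB.1
  | [a], [b], _, _, h, _ => by simpa [chainD] using h
  | [_], b :: c :: N, _, hB, _, ht => by
    have := (hB.of_cons (List.cons_ne_nil c N)).chainD_tail_pos_lt
    simp only [List.tail_cons, chainD] at ht this
    omega
  | a :: c :: M, [_], hA, _, _, ht => by
    have := (hA.of_cons (List.cons_ne_nil c M)).chainD_tail_pos_lt
    simp only [List.tail_cons, chainD] at ht this
    omega
  | a :: c :: M, b :: e :: N, hA, hB, h, ht => by
    have hM := hA.of_cons (List.cons_ne_nil c M)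
    have hN := hB.of_cons (List.cons_ne_nil e N)
    have bM := hM.chainD_tail_pos_lt
    have bN := hN.chainD_tail_pos_lt
    simp only [List.tail_cons, chainD_cons_cons] at h ht bM bN
    have htt : chainD M = chainD N := by
      refine sub_eq_zero.mp (Int.eq_zero_of_abs_lt_dvd (m := chainD (c :: M))
        ⟨a - b, by linear_combination -h + b * ht⟩ ?_)
      rw [abs_lt]
      constructor <;> linarith
    have hab : a = b := by
      have := hM.chainD_pos
      have : (a - b) * chainD (c :: M) = 0 := by linear_combination h + htt - b * ht
      nlinarith [mul_eq_zero.mp this]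
    rw [hab, hM.eq_of_chainD_eq hN ht htt]

open Matrix

def chainStep (a : ℤ) : Matrix (Fin 2) (Fin 2) ℤ := !![a, -1; 1, 0]

def chainMatrix (L : List ℤ) : Matrix (Fin 2) (Fin 2) ℤ := (L.map chainStep).prod

theorem chainMatrix_cons (a : ℤ) (L : List ℤ) :
    chainMatrix (a :: L) = chainStep a * chainMatrix L := by
  simp [chainMatrix]

theorem chainMatrix_append_singleton (L : List ℤ) (a : ℤ) :
    chainMatrix (L ++ [a]) = chainMatrix L * chainStep a := by
  simp [chainMatrix]

theorem det_chainMatrix (L : List ℤ) : (chainMatrix L).det = 1 := by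
  rw [chainMatrix, ← coe_detMonoidHom, map_list_prod, List.prod_eq_one]
  simp [chainStep, det_fin_two]

theorem chainMatrix_cons_one_zero_eq (a : ℤ) (L : List ℤ) :
    chainMatrix (a :: L) 1 0 = chainMatrix L 0 0 := by
  simp [chainMatrix_cons, chainStep, mul_apply, Fin.sum_univ_two]

theorem chainMatrix_zero_zero : ∀ L : List ℤ, chainMatrix L 0 0 = chainD L
  | [] => by simp [chainMatrix, chainD]
  | [a] => by simp [chainMatrix, chainStep, chainD]
  | a :: b :: L => by
    rw [chainD_cons_cons, ← chainMatrix_zero_zero (b :: L), ← chainMatrix_zero_zero L,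
      ← chainMatrix_cons_one_zero_eq b L, chainMatrix_cons a (b :: L)]
    simp [chainStep, mul_apply, Fin.sum_univ_two, sub_eq_add_neg]

theorem chainMatrix_cons_one_zero (a : ℤ) (L : List ℤ) :
    chainMatrix (a :: L) 1 0 = chainD L := by
  rw [chainMatrix_cons_one_zero_eq, chainMatrix_zero_zero]

theorem chainStep_transpose (a : ℤ) :
    (chainStep a)ᵀ = !![1, 0; 0, -1] * chainStep a * !![1, 0; 0, -1] := by
  ext i j
  fin_cases i <;> fin_cases j <;> simp [chainStep, mul_apply, Fin.sum_univ_two]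

theorem chainMatrix_reverse (L : List ℤ) :
    chainMatrix L.reverse = !![1, 0; 0, -1] * (chainMatrix L)ᵀ * !![1, 0; 0, -1] := by
  have hD : (!![1, 0; 0, -1] : Matrix (Fin 2) (Fin 2) ℤ) * !![1, 0; 0, -1] = 1 := by
    simp [one_fin_two]
  induction L with
  | nil =>
    rw [List.reverse_nil, chainMatrix, List.map_nil, List.prod_nil, transpose_one,
      Matrix.mul_one, hD]
  | cons a L ih =>
    rw [List.reverse_cons, chainMatrix_append_singleton, ih, chainMatrix_cons, transpose_mul,
      chainStep_transpose]
    simp only [Matrix.mul_assoc, hD, Matrix.mul_one]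

theorem chainD_reverse (L : List ℤ) : chainD L.reverse = chainD L := by
  rw [← chainMatrix_zero_zero, ← chainMatrix_zero_zero, chainMatrix_reverse]
  simp [mul_apply, vecMul, dotProduct, Fin.sum_univ_two]

theorem chainD_reverse_tail {L : List ℤ} (hL : L ≠ []) :
    chainD L.reverse.tail = -chainMatrix L 0 1 := by
  obtain ⟨b, M, hR⟩ := List.exists_cons_of_ne_nil (List.reverse_ne_nil_iff.mpr hL)
  rw [hR, List.tail_cons, ← chainMatrix_cons_one_zero b, ← hR, chainMatrix_reverse]
  simp [mul_apply, vecMul, dotProduct, Fin.sum_univ_two]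

theorem chainD_tail_mul_chainD_reverse_tail_modEq {L : List ℤ} (hL : L ≠ []) :
    chainD L.tail * chainD L.reverse.tail ≡ 1 [ZMOD chainD L] := by
  obtain ⟨a, M, rfl⟩ := List.exists_cons_of_ne_nil hL
  have hdet := det_chainMatrix (a :: M)
  rw [det_fin_two, chainMatrix_zero_zero, chainMatrix_cons_one_zero] at hdet
  rw [Int.modEq_iff_dvd, chainD_reverse_tail hL, List.tail_cons]
  exact ⟨chainMatrix (a :: M) 1 1, by linear_combination -hdet⟩

theorem isCoprime_chainD_tail {L : List ℤ} (hL : L ≠ []) :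
    IsCoprime (chainD L.tail) (chainD L) := by
  obtain ⟨k, hk⟩ := (chainD_tail_mul_chainD_reverse_tail_modEq hL).dvd
  exact ⟨chainD L.reverse.tail, k, by linear_combination -hk⟩

theorem Admissible.chainD_eq_of_inductance_eq {B : List ℤ} (hB : Admissible B) {m n : ℤ}
    (hn : 0 < n) (hmn : IsCoprime m n) (h : inductance B = m / n) :
    chainD B.tail = m ∧ chainD B = n :=
  Rat.div_int_inj hB.chainD_pos hn (Int.isCoprime_iff_nat_coprime.mp (isCoprime_chainD_tail hB.1))
    (Int.isCoprime_iff_nat_coprime.mp hmn) h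

theorem chainD_of_inductance_eq_one_sub {A B : List ℤ} (hA : Admissible A) (hB : Admissible B)
    (h : inductance B = 1 - inductance A.reverse) :
    chainD B = chainD A ∧ chainD B.tail = chainD A - chainD A.reverse.tail := by
  have hcop : IsCoprime (chainD A - chainD A.reverse.tail) (chainD A) := by
    have := isCoprime_chainD_tail hA.reverse.1
    rw [chainD_reverse] at this
    simpa using IsCoprime.mul_sub_left_left_iff (z := 1).mpr this
  have hpos : (chainD A : ℚ) ≠ 0 := by exact_mod_cast hA.chainD_pos.ne'
  have hfrac : inductance B = ((chainD A - chainD A.reverse.tail : ℤ) : ℚ) / chainD A := by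
    rw [h, inductance, chainD_reverse]
    field_simp
    push_cast
    ring
  exact (hB.chainD_eq_of_inductance_eq hA.chainD_pos hcop hfrac).symm

theorem chainD_reverse_tail_eq_of_adjoint {A B : List ℤ} (hA : Admissible A) (hB : Admissible B)
    (hd : chainD B = chainD A) (ht : chainD B.tail = chainD A - chainD A.reverse.tail) :
    chainD B.reverse.tail = chainD A - chainD A.tail := by
  have hcongA := (chainD_tail_mul_chainD_reverse_tail_modEq hA.1).dvd
  have hcongB := (chainD_tail_mul_chainD_reverse_tail_modEq hB.1).dvd
  have hq := hA.chainD_tail_pos_lt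
  have hs := hB.reverse.chainD_tail_pos_lt
  rw [hd, ht] at hcongB
  rw [chainD_reverse, hd] at hs
  set p := chainD A
  set q := chainD A.tail
  set q' := chainD A.reverse.tail
  set s' := chainD B.reverse.tail
  obtain ⟨k, hk⟩ := hcongA
  obtain ⟨l, hl⟩ := hcongB
  -- `q q' ≡ 1` and `(p - q') s' ≡ 1` give `s' ≡ s' q q' ≡ -q`
  have hdvd : p ∣ q + s' - p :=
    ⟨q * l + s' * k + q * s' - 1, by linear_combination q * hl + s' * hk⟩
  have := Int.eq_zero_of_abs_lt_dvd hdvd (abs_lt.mpr ⟨by linarith, by linarith⟩)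
  linarith

theorem adjoint_adjoint (A As Ass : List ℤ) (hA : Admissible A) (hAs : Admissible As)
    (hAss : Admissible Ass)
    (h1 : inductance As = 1 - inductance A.reverse)
    (h2 : inductance Ass = 1 - inductance As.reverse) :
    Ass = A := by
  obtain ⟨hs, hst⟩ := chainD_of_inductance_eq_one_sub hA hAs h1
  obtain ⟨hss, hsst⟩ := chainD_of_inductance_eq_one_sub hAs hAss h2
  have hsr := chainD_reverse_tail_eq_of_adjoint hA hAs hs hst
  exact hAss.eq_of_chainD_eq hA (hss.trans hs) (by rw [hsst, hsr, hs]; ring)
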